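/- (Center-of-mass invariance, core of the elliptic structure theorem) Let Γ^x be the set of germs at x with a cocycle D into GL(q,ℝ) such that the set M_x = {(Dγ)^t (Dγ) : γ ∈ Γ^x} of positive-definite symmetric matrices is bounded. Then the closed convex hull C(x) of M_x is a compact convex subset of the positive-definite cone, and for any δ ∈ Γ^{z,x}, the pullback action S ↦ (Dδ)^t S (Dδ) maps C(x) onto C(z); hence any canonical point of C(x) (e.g., its barycenter/center of mass) S'_x satisfies (Dδ)^t S'_x (Dδ) = S'_z, defining an invariant measurable inner product. -/
import Mathlib


open scoped RealInnerProductSpace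

/-- The set `M_x = {(Dγ)^t·(Dγ) : γ ∈ Γ^x}` of positive-definite symmetric operators
associated to a `GL(q,ℝ)`-valued cocycle `D` at the point `x`. -/
noncomputable def MSet {T G : Type*} (q : ℕ) (s : G → T)
    (D : G → (EuclideanSpace ℝ (Fin q) →L[ℝ] EuclideanSpace ℝ (Fin q))ˣ) (x : T) :
    Set (EuclideanSpace ℝ (Fin q) →L[ℝ] EuclideanSpace ℝ (Fin q)) :=
  {S | ∃ γ : G, s γ = x ∧
    S = (ContinuousLinearMap.adjoint
          ((D γ : (EuclideanSpace ℝ (Fin q) →L[ℝ] EuclideanSpace ℝ (Fin q))ˣ) :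
            EuclideanSpace ℝ (Fin q) →L[ℝ] EuclideanSpace ℝ (Fin q))).comp
        ((D γ : (EuclideanSpace ℝ (Fin q) →L[ℝ] EuclideanSpace ℝ (Fin q))ˣ) :
          EuclideanSpace ℝ (Fin q) →L[ℝ] EuclideanSpace ℝ (Fin q)) }

namespace Stmt18Aux

variable {q : ℕ}

local notation "E" => EuclideanSpace ℝ (Fin q)

lemma key (A B : E →L[ℝ] E) :
    (ContinuousLinearMap.adjoint B).comp (((ContinuousLinearMap.adjoint A).comp A).comp B) =
    (ContinuousLinearMap.adjoint (A.comp B)).comp (A.comp B) := by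
  rw [ContinuousLinearMap.adjoint_comp]
  ext v
  simp [ContinuousLinearMap.comp_apply]

/-- Conjugation as a continuous linear map. -/
noncomputable def conjCLM (A : E →L[ℝ] E) :
    (E →L[ℝ] E) →L[ℝ] (E →L[ℝ] E) :=
  ((ContinuousLinearMap.compL ℝ E E E (ContinuousLinearMap.adjoint A)).comp
    ((ContinuousLinearMap.compL ℝ E E E).flip A))

@[simp] lemma conjCLM_apply (A S : E →L[ℝ] E) :
    conjCLM A S = (ContinuousLinearMap.adjoint A).comp (S.comp A) := rfl

lemma image_cl_ch_subset (A : E →L[ℝ] E) (s : Set (E →L[ℝ] E)) :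
    conjCLM A '' closure (convexHull ℝ s) ⊆
      closure (convexHull ℝ (conjCLM A '' s)) := by
  have h1 : conjCLM A '' convexHull ℝ s = convexHull ℝ (conjCLM A '' s) :=
    (conjCLM A).toLinearMap.image_convexHull s
  calc conjCLM A '' closure (convexHull ℝ s)
      ⊆ closure (conjCLM A '' convexHull ℝ s) :=
        image_closure_subset_closure_image (conjCLM A).continuous
    _ = closure (convexHull ℝ (conjCLM A '' s)) := by rw [h1]

lemma conj_conj (A B : E →L[ℝ] E) (h : A.comp B = 1) (S : E →L[ℝ] E) :
    conjCLM B (conjCLM A S) = S := by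
  ext v
  simp only [conjCLM_apply, ContinuousLinearMap.comp_apply]
  have hv : A (B v) = v := by
    have := congrArg (fun f : E →L[ℝ] E => f v) h
    simpa using this
  rw [hv, ← ContinuousLinearMap.comp_apply (ContinuousLinearMap.adjoint B),
    ← ContinuousLinearMap.adjoint_comp, h, ContinuousLinearMap.one_def,
    ContinuousLinearMap.adjoint_id]
  rfl

lemma mset_image {T G : Type*} (s r : G → T)
    (D : G → (E →L[ℝ] E)ˣ)
    (hcomp : ∀ γ δ : G, s γ = r δ →
      ∃ γδ : G, s γδ = s δ ∧ r γδ = r γ ∧ D γδ = D γ * D δ)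
    (hinv : ∀ δ : G, ∃ δ' : G, s δ' = r δ ∧ r δ' = s δ ∧ D δ' = (D δ)⁻¹)
    (δ : G) :
    conjCLM ((D δ : (E →L[ℝ] E)ˣ) : E →L[ℝ] E) '' MSet q s D (r δ) = MSet q s D (s δ) := by
  ext S
  constructor
  · rintro ⟨S', ⟨γ, hγ, rfl⟩, rfl⟩
    obtain ⟨γδ, hs, hr, hD⟩ := hcomp γ δ hγ
    refine ⟨γδ, hs, ?_⟩
    rw [conjCLM_apply, key, hD, Units.val_mul, ContinuousLinearMap.mul_def]
  · rintro ⟨η, hη, rfl⟩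
    obtain ⟨δ', hs', hr', hD'⟩ := hinv δ
    obtain ⟨γ, hsγ, hrγ, hDγ⟩ := hcomp η δ' (by rw [hr', hη])
    refine ⟨(ContinuousLinearMap.adjoint ((D γ : (E →L[ℝ] E)ˣ) : E →L[ℝ] E)).comp
      ((D γ : (E →L[ℝ] E)ˣ) : E →L[ℝ] E), ⟨γ, by rw [hsγ, hs'], rfl⟩, ?_⟩
    have hmul : D γ * D δ = D η := by rw [hDγ, hD', mul_assoc, inv_mul_cancel, mul_one]
    have hAB : ((D γ : (E →L[ℝ] E)ˣ) : E →L[ℝ] E).comp ((D δ : (E →L[ℝ] E)ˣ) : E →L[ℝ] E)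
        = ((D η : (E →L[ℝ] E)ˣ) : E →L[ℝ] E) := by
      rw [← ContinuousLinearMap.mul_def, ← Units.val_mul, hmul]
    rw [conjCLM_apply, key, hAB]

end Stmt18Aux

open Stmt18Aux in
/-- (Center-of-mass invariance, core of the elliptic structure theorem)  Let `D` be a
`GL(q,ℝ)`-valued cocycle over a groupoid `Γ` over `T` (with source `s`, range `r`,
composition and inverses), and suppose that for each `x` the family
`{Dγ, (Dγ)⁻¹ : γ ∈ Γ^x}` is uniformly bounded in norm.  Then:
(1) the key computation `(Dδ)^t((Dγ)^t(Dγ))(Dδ) = (D(γ∘δ))^t(D(γ∘δ))` holds;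
(2) the closed convex hull `C(x)` of `M_x = {(Dγ)^t(Dγ)}` is compact and consists of
positive-definite operators; and
(3) for any `δ ∈ Γ^{z,x}` the pullback `S ↦ (Dδ)^t·S·(Dδ)` maps `C(x)` onto `C(z)`. -/
theorem stmt_18 {T G : Type*} (q : ℕ) (s r : G → T)
    (D : G → (EuclideanSpace ℝ (Fin q) →L[ℝ] EuclideanSpace ℝ (Fin q))ˣ)
    (hid : ∀ z : T, ∃ γ : G, s γ = z ∧ r γ = z ∧ D γ = 1)
    (hcomp : ∀ γ δ : G, s γ = r δ →
      ∃ γδ : G, s γδ = s δ ∧ r γδ = r γ ∧ D γδ = D γ * D δ)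
    (hinv : ∀ δ : G, ∃ δ' : G, s δ' = r δ ∧ r δ' = s δ ∧ D δ' = (D δ)⁻¹)
    (hbdd : ∀ x : T, ∃ κ : ℝ, ∀ γ : G, s γ = x →
      ‖((D γ : (EuclideanSpace ℝ (Fin q) →L[ℝ] EuclideanSpace ℝ (Fin q))ˣ) :
          EuclideanSpace ℝ (Fin q) →L[ℝ] EuclideanSpace ℝ (Fin q))‖ ≤ κ ∧
      ‖(((D γ)⁻¹ : (EuclideanSpace ℝ (Fin q) →L[ℝ] EuclideanSpace ℝ (Fin q))ˣ) :
          EuclideanSpace ℝ (Fin q) →L[ℝ] EuclideanSpace ℝ (Fin q))‖ ≤ κ) :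
    (∀ γ δ γδ : G, s γ = r δ → D γδ = D γ * D δ →
      (ContinuousLinearMap.adjoint
          ((D δ : _ˣ) : EuclideanSpace ℝ (Fin q) →L[ℝ] EuclideanSpace ℝ (Fin q))).comp
        ((((ContinuousLinearMap.adjoint
            ((D γ : _ˣ) : EuclideanSpace ℝ (Fin q) →L[ℝ] EuclideanSpace ℝ (Fin q))).comp
          (((D γ : _ˣ) : EuclideanSpace ℝ (Fin q) →L[ℝ] EuclideanSpace ℝ (Fin q)))).comp
            (((D δ : _ˣ) : EuclideanSpace ℝ (Fin q) →L[ℝ] EuclideanSpace ℝ (Fin q))))) =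
      (ContinuousLinearMap.adjoint
          ((D γδ : _ˣ) : EuclideanSpace ℝ (Fin q) →L[ℝ] EuclideanSpace ℝ (Fin q))).comp
        (((D γδ : _ˣ) : EuclideanSpace ℝ (Fin q) →L[ℝ] EuclideanSpace ℝ (Fin q)))) ∧
    (∀ x : T,
      IsCompact (closure (convexHull ℝ (MSet q s D x))) ∧
      Convex ℝ (closure (convexHull ℝ (MSet q s D x))) ∧
      ∀ S ∈ closure (convexHull ℝ (MSet q s D x)),
        ∀ v : EuclideanSpace ℝ (Fin q), v ≠ 0 → 0 < ⟪S v, v⟫) ∧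
    (∀ δ : G,
      (fun S : EuclideanSpace ℝ (Fin q) →L[ℝ] EuclideanSpace ℝ (Fin q) =>
          (ContinuousLinearMap.adjoint
              ((D δ : _ˣ) : EuclideanSpace ℝ (Fin q) →L[ℝ] EuclideanSpace ℝ (Fin q))).comp
            (S.comp
              (((D δ : _ˣ) : EuclideanSpace ℝ (Fin q) →L[ℝ] EuclideanSpace ℝ (Fin q))))) ''
        closure (convexHull ℝ (MSet q s D (r δ))) =
      closure (convexHull ℝ (MSet q s D (s δ)))) := by
  refine ⟨?_, ?_, ?_⟩
  · -- part 1
    intro γ δ γδ hs hD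
    rw [key, hD, Units.val_mul, ContinuousLinearMap.mul_def]
  · -- part 2
    intro x
    obtain ⟨κ, hκ⟩ := hbdd x
    have hMb : MSet q s D x ⊆ Metric.closedBall 0 (κ * κ) := by
      rintro S ⟨γ, hγ, rfl⟩
      have h1 := (hκ γ hγ).1
      have h0 : (0:ℝ) ≤ ‖((D γ : _ˣ) : EuclideanSpace ℝ (Fin q) →L[ℝ] EuclideanSpace ℝ (Fin q))‖ := norm_nonneg _
      simp only [Metric.mem_closedBall, dist_zero_right]
      exact le_trans (le_of_eq (ContinuousLinearMap.norm_adjoint_comp_self _))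
        (mul_le_mul h1 h1 h0 (h0.trans h1))
    have hcompact : IsCompact (closure (convexHull ℝ (MSet q s D x))) := by
      apply Metric.isCompact_of_isClosed_isBounded isClosed_closure
      exact ((isBounded_convexHull.mpr ((Metric.isBounded_closedBall).subset hMb))).closure
    refine ⟨hcompact, (convex_convexHull ℝ _).closure, ?_⟩
    set P : Set (EuclideanSpace ℝ (Fin q) →L[ℝ] EuclideanSpace ℝ (Fin q)) :=
      {S | ∀ v : EuclideanSpace ℝ (Fin q), ‖v‖ ^ 2 ≤ κ ^ 2 * ⟪S v, v⟫} with hP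
    have hPclosed : IsClosed P := by
      have : P = ⋂ v : EuclideanSpace ℝ (Fin q),
          (fun S : EuclideanSpace ℝ (Fin q) →L[ℝ] EuclideanSpace ℝ (Fin q) =>
            κ ^ 2 * ⟪S v, v⟫) ⁻¹' Set.Ici (‖v‖ ^ 2) := by
        ext S; simp [hP, Set.mem_iInter]
      rw [this]
      refine isClosed_iInter fun v => IsClosed.preimage ?_ isClosed_Ici
      exact (continuous_const.mul (((ContinuousLinearMap.apply ℝ
        (EuclideanSpace ℝ (Fin q)) v).continuous).inner continuous_const))
    have hPconvex : Convex ℝ P := by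
      intro S₁ h₁ S₂ h₂ a b ha hb hab
      intro v
      have e1 := h₁ v
      have e2 := h₂ v
      have : ⟪(a • S₁ + b • S₂) v, v⟫ = a * ⟪S₁ v, v⟫ + b * ⟪S₂ v, v⟫ := by
        simp [ContinuousLinearMap.add_apply, ContinuousLinearMap.smul_apply,
          inner_add_left, real_inner_smul_left, Finset.mul_sum, mul_assoc]
      rw [this]
      nlinarith [sq_nonneg κ]
    have hMP : MSet q s D x ⊆ P := by
      rintro S ⟨γ, hγ, rfl⟩ v
      have hinner : ⟪((ContinuousLinearMap.adjoint ((D γ : _ˣ) :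
          EuclideanSpace ℝ (Fin q) →L[ℝ] EuclideanSpace ℝ (Fin q))).comp ((D γ : _ˣ) :
          EuclideanSpace ℝ (Fin q) →L[ℝ] EuclideanSpace ℝ (Fin q))) v, v⟫ =
          ‖((D γ : _ˣ) : EuclideanSpace ℝ (Fin q) →L[ℝ] EuclideanSpace ℝ (Fin q)) v‖ ^ 2 := by
        rw [ContinuousLinearMap.comp_apply, ContinuousLinearMap.adjoint_inner_left,
          real_inner_self_eq_norm_sq]
      rw [hinner]
      have hv : ‖v‖ ≤ κ * ‖((D γ : _ˣ) : EuclideanSpace ℝ (Fin q) →L[ℝ] EuclideanSpace ℝ (Fin q)) v‖ := by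
        have heq : (((D γ)⁻¹ : _ˣ) : EuclideanSpace ℝ (Fin q) →L[ℝ] EuclideanSpace ℝ (Fin q))
            (((D γ : _ˣ) : EuclideanSpace ℝ (Fin q) →L[ℝ] EuclideanSpace ℝ (Fin q)) v) = v := by
          rw [← ContinuousLinearMap.comp_apply, ← ContinuousLinearMap.mul_def,
            ← Units.val_mul, inv_mul_cancel, Units.val_one, ContinuousLinearMap.one_apply]
        calc ‖v‖ = ‖(((D γ)⁻¹ : _ˣ) : EuclideanSpace ℝ (Fin q) →L[ℝ] EuclideanSpace ℝ (Fin q))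
              (((D γ : _ˣ) : EuclideanSpace ℝ (Fin q) →L[ℝ] EuclideanSpace ℝ (Fin q)) v)‖ := by rw [heq]
          _ ≤ ‖(((D γ)⁻¹ : _ˣ) : EuclideanSpace ℝ (Fin q) →L[ℝ] EuclideanSpace ℝ (Fin q))‖ *
              ‖((D γ : _ˣ) : EuclideanSpace ℝ (Fin q) →L[ℝ] EuclideanSpace ℝ (Fin q)) v‖ :=
            ContinuousLinearMap.le_opNorm _ _
          _ ≤ κ * ‖((D γ : _ˣ) : EuclideanSpace ℝ (Fin q) →L[ℝ] EuclideanSpace ℝ (Fin q)) v‖ :=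
            mul_le_mul_of_nonneg_right (hκ γ hγ).2 (norm_nonneg _)
      nlinarith [norm_nonneg v, norm_nonneg (((D γ : _ˣ) : EuclideanSpace ℝ (Fin q) →L[ℝ] EuclideanSpace ℝ (Fin q)) v)]
    have hsub : closure (convexHull ℝ (MSet q s D x)) ⊆ P :=
      closure_minimal (convexHull_min hMP hPconvex) hPclosed
    intro S hS v hv
    have hvnorm : 0 < ‖v‖ := norm_pos_iff.mpr hv
    have hκ1 : (1:ℝ) ≤ κ := by
      obtain ⟨γ₀, hγ₀, _, hD₀⟩ := hid x
      have h1 := (hκ γ₀ hγ₀).1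
      rw [hD₀] at h1
      haveI : Nontrivial (EuclideanSpace ℝ (Fin q)) := nontrivial_of_ne v 0 hv
      simpa [Units.val_one, ContinuousLinearMap.norm_id] using h1
    have := hsub hS v
    nlinarith
  · -- part 3
    intro δ
    have hfun : (fun S : EuclideanSpace ℝ (Fin q) →L[ℝ] EuclideanSpace ℝ (Fin q) =>
        (ContinuousLinearMap.adjoint ((D δ : _ˣ) : EuclideanSpace ℝ (Fin q) →L[ℝ] EuclideanSpace ℝ (Fin q))).comp
          (S.comp ((D δ : _ˣ) : EuclideanSpace ℝ (Fin q) →L[ℝ] EuclideanSpace ℝ (Fin q)))) =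
        conjCLM ((D δ : _ˣ) : EuclideanSpace ℝ (Fin q) →L[ℝ] EuclideanSpace ℝ (Fin q)) := rfl
    rw [hfun]
    apply Set.Subset.antisymm
    · refine (image_cl_ch_subset _ _).trans ?_
      rw [mset_image s r D hcomp hinv δ]
    · intro S hS
      obtain ⟨δ', hs', hr', hD'⟩ := hinv δ
      have hsub2 : conjCLM ((D δ' : _ˣ) : EuclideanSpace ℝ (Fin q) →L[ℝ] EuclideanSpace ℝ (Fin q)) ''
          closure (convexHull ℝ (MSet q s D (r δ'))) ⊆
          closure (convexHull ℝ (MSet q s D (s δ'))) := by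
        refine (image_cl_ch_subset _ _).trans ?_
        rw [mset_image s r D hcomp hinv δ']
      have h1 : conjCLM ((D δ' : _ˣ) : EuclideanSpace ℝ (Fin q) →L[ℝ] EuclideanSpace ℝ (Fin q)) S ∈
          closure (convexHull ℝ (MSet q s D (r δ))) := by
        rw [← hs']
        exact hsub2 ⟨S, by rw [hr']; exact hS, rfl⟩
      refine ⟨_, h1, ?_⟩
      rw [hD']
      apply conj_conj
      rw [← ContinuousLinearMap.mul_def, ← Units.val_mul, inv_mul_cancel, Units.val_one]
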